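/- arXiv:2208.06483 — 9 statements merged into one kernel-verified Lean document; each statement's English description precedes it below -/
import Mathlib

section
/- Let x ∈ ℂ with 0 < |x| < ρ, let y ∈ ℂ be any fixed square root of x (y² = x), and let z ∈ ℂ with |z| < |y|. Then ((y + 1)/(y − z))·f(yz) + ((y − 1)/(y + z))·f(−yz) = 2·∑_{n=0}^∞ R_n(x) z^n, the series converging. -/
/-!
Put `w = z / y`, so that `‖w‖ < 1` and `y z = x w`. Then `f (y z) = ∑ d_k x^k w^k`, and
`f (y z) / (1 - w)` is the Cauchy product of this series with the geometric series `∑ w^n`,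
whose `n`-th coefficient is the partial sum `f_n(x)`; likewise for `-w`. Since
`(y + 1) / (y - z) = (y + 1) / y / (1 - w)`, the left-hand side becomes
`∑ f_n(x) ((y + 1) w^n + (y - 1) (-w)^n) / y`, and the bracket is `2 y w^n` for even `n` and
`2 w^n` for odd `n`; either way the `n`-th term is `2 f_n(x) z^n / x^⌈n/2⌉ = 2 R_n(x) z^n`.
-/

open scoped ENNReal NNReal

open Finset

section Geometric

variable {𝕜 : Type*} [NormedDivisionRing 𝕜]

theorem Summable.summable_norm_mul_geometric {a : ℕ → 𝕜} (ha : Summable a) {w : 𝕜}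
    (hw : ‖w‖ < 1) : Summable fun k => ‖a k * w ^ k‖ := by
  obtain ⟨C, hC⟩ := ha.tendsto_atTop_zero.norm.bddAbove_range
  refine .of_nonneg_of_le (fun _ => norm_nonneg _) (fun k => ?_)
    ((summable_geometric_of_lt_one (norm_nonneg w) hw).mul_left C)
  rw [norm_mul, norm_pow]
  exact mul_le_mul_of_nonneg_right (hC ⟨k, rfl⟩) (by positivity)

variable [CompleteSpace 𝕜]

theorem hasSum_sum_range_mul_geometric {a : ℕ → 𝕜} (ha : Summable a) {w : 𝕜}
    (hw : ‖w‖ < 1) :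
    HasSum (fun n => (∑ k ∈ range (n + 1), a k) * w ^ n)
      ((∑' k, a k * w ^ k) * (1 - w)⁻¹) := by
  rw [← tsum_geometric_of_norm_lt_one hw]
  refine (hasSum_sum_range_mul_of_summable_norm (ha.summable_norm_mul_geometric hw)
    (by simpa using summable_geometric_of_lt_one (norm_nonneg w) hw)).congr_fun fun n => ?_
  rw [sum_mul]
  refine sum_congr rfl fun k hk => ?_
  rw [mul_assoc, pow_mul_pow_sub w (Nat.lt_succ_iff.mp (mem_range.mp hk))]

end Geometric

theorem add_one_div_mul_pow_add_sub_one_div_mul_neg_pow {K : Type*} [Field K] {y : K}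
    (hy : y ≠ 0) (z : K) (n : ℕ) :
    (y + 1) / y * (z / y) ^ n + (y - 1) / y * (-(z / y)) ^ n =
      2 * z ^ n / (y ^ 2) ^ ((n + 1) / 2) := by
  obtain ⟨m, rfl | rfl⟩ := Nat.even_or_odd' n
  · rw [(even_two_mul m).neg_pow, show (2 * m + 1) / 2 = m by omega, ← pow_mul, div_pow]
    field_simp
    ring
  · rw [(odd_two_mul_add_one m).neg_pow, show (2 * m + 1 + 1) / 2 = m + 1 by omega, ← pow_mul,
      div_pow]
    field_simp
    ring

theorem stmt_2_general (d : ℕ → ℂ)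
    (ρ : ℝ≥0∞)
    (hconv : ∀ w : ℂ, (‖w‖₊ : ℝ≥0∞) < ρ → Summable (fun k => d k * w ^ k))
    (x : ℂ) (hx : (‖x‖₊ : ℝ≥0∞) < ρ)
    (y : ℂ) (hyx : y ^ 2 = x) (z : ℂ) (hz : ‖z‖ < ‖y‖) :
    let f : ℂ → ℂ := fun w => ∑' k, d k * w ^ k
    let fn : ℕ → ℂ → ℂ := fun n w => ∑ k ∈ Finset.range (n + 1), d k * w ^ k
    let R : ℕ → ℂ → ℂ := fun n w => fn n w / w ^ ((n + 1) / 2)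
    ∃ S : ℂ, HasSum (fun n => R n x * z ^ n) S ∧
      (y + 1) / (y - z) * f (y * z) + (y - 1) / (y + z) * f (-(y * z)) = 2 * S := by
  intro f fn R
  have hy : y ≠ 0 := norm_pos_iff.mp ((norm_nonneg z).trans_lt hz)
  set w := z / y with hw_def
  have hw : ‖w‖ < 1 := by rwa [norm_div, div_lt_one (norm_pos_iff.mpr hy)]
  have hw' : ‖-w‖ < 1 := by rwa [norm_neg]
  have hxw : x * w = y * z := by rw [← hyx, hw_def]; field_simp
  have hf : f (y * z) = ∑' k, d k * x ^ k * w ^ k :=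
    tsum_congr fun k => by rw [← hxw, mul_pow, mul_assoc]
  have hf' : f (-(y * z)) = ∑' k, d k * x ^ k * (-w) ^ k :=
    tsum_congr fun k => by rw [← hxw, ← mul_neg, mul_pow, mul_assoc]
  have hcomb : (y + 1) / (y - z) * f (y * z) + (y - 1) / (y + z) * f (-(y * z)) =
      (y + 1) / y * ((∑' k, d k * x ^ k * w ^ k) * (1 - w)⁻¹) +
        (y - 1) / y * ((∑' k, d k * x ^ k * (-w) ^ k) * (1 - -w)⁻¹) := by
    rw [hf, hf', hw_def, one_sub_div hy, sub_neg_eq_add, one_add_div hy, inv_div, inv_div]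
    field_simp
  have hsum : HasSum (fun n => 2 * (R n x * z ^ n))
      ((y + 1) / (y - z) * f (y * z) + (y - 1) / (y + z) * f (-(y * z))) := by
    rw [hcomb]
    refine (((hasSum_sum_range_mul_geometric (hconv x hx) hw).mul_left ((y + 1) / y)).add
      ((hasSum_sum_range_mul_geometric (hconv x hx) hw').mul_left ((y - 1) / y))).congr_fun
        fun n => ?_
    have hcoef := add_one_div_mul_pow_add_sub_one_div_mul_neg_pow hy z n
    rw [← hw_def, hyx] at hcoef
    calc 2 * (R n x * z ^ n) = fn n x * (2 * z ^ n / x ^ ((n + 1) / 2)) := by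
          simp only [R]
          ring
      _ = _ := by
          rw [← hcoef]
          ring
  refine ⟨_, (hasSum_mul_left_iff two_ne_zero).mp ?_, (mul_div_cancel₀ _ two_ne_zero).symm⟩
  rwa [mul_div_cancel₀ _ two_ne_zero]

/-- For `0 < |x| < ρ`, `y` a fixed square root of `x`, and `|z| < |y|`:
`((y+1)/(y−z))·f(yz) + ((y−1)/(y+z))·f(−yz) = 2·∑ R_n(x) z^n`, the series converging.
Here `f(z) = ∑ d_k z^k` has nonzero coefficients, `d_0 = 1`, radius of convergence `ρ`,
`0 < ρ ≤ ∞`; `f_n` is the `n`-th partial sum, `R_{2n}(x) = f_{2n}(x)/x^n`,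
`R_{2n+1}(x) = f_{2n+1}(x)/x^{n+1}` (encoded as `R n x = f_n(x)/x^((n+1)/2)` with
natural division). -/
theorem stmt_2 (d : ℕ → ℂ) (hd0 : d 0 = 1) (hdk : ∀ k, d k ≠ 0)
    (ρ : ℝ≥0∞) (hρ : 0 < ρ)
    (hconv : ∀ w : ℂ, (‖w‖₊ : ℝ≥0∞) < ρ → Summable (fun k => d k * w ^ k))
    (x : ℂ) (hx0 : x ≠ 0) (hx : (‖x‖₊ : ℝ≥0∞) < ρ)
    (y : ℂ) (hyx : y ^ 2 = x) (z : ℂ) (hz : ‖z‖ < ‖y‖) :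
    let f : ℂ → ℂ := fun w => ∑' k, d k * w ^ k
    let fn : ℕ → ℂ → ℂ := fun n w => ∑ k ∈ Finset.range (n + 1), d k * w ^ k
    let R : ℕ → ℂ → ℂ := fun n w => fn n w / w ^ ((n + 1) / 2)
    ∃ S : ℂ, HasSum (fun n => R n x * z ^ n) S ∧
      (y + 1) / (y - z) * f (y * z) + (y - 1) / (y + z) * f (-(y * z)) = 2 * S :=
  stmt_2_general d ρ hconv x hx y hyx z hz
end

section
/- Let x ∈ ℂ with 0 < |x| < ρ and let y ∈ ℂ be any fixed square root of x (y² = x). Then for every n ≥ 0, R_n(x) = (1/(4πi)) · ∮_{|z| = |y|/2} ( ((y + 1)/(y − z))·f(yz) + ((y − 1)/(y + z))·f(−yz) ) · z^{−n−1} dz, where the contour integral is over the circle of radius |y|/2 centered at 0, traversed counterclockwise. -/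
open scoped ENNReal NNReal Real
open Complex FormalMultilinearSeries

/-!
Expanding both kernels geometrically in `z / y` and `-z / y` and multiplying by the power series
of `f(± y z)`, the integrand's holomorphic part `g(z)` has Taylor coefficients
`((y + 1) / y ^ (m + 1) + (y - 1) / (y * (-y) ^ m)) f_m(y²)` at `0`. The two terms add up or cancel
according to the parity of `m`, which leaves exactly `2 R_m(x)`. As `g` is holomorphic on
`|z| < |y|`, Cauchy's coefficient formula on the circle of radius `|y| / 2` concludes.
-/

lemma le_radius_ofScalars_of_summable {a : ℕ → ℂ} {R : ℝ≥0∞}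
    (h : ∀ z : ℂ, (‖z‖₊ : ℝ≥0∞) < R → Summable fun m => a m * z ^ m) :
    R ≤ (ofScalars ℂ a).radius := by
  refine ENNReal.le_of_forall_nnreal_lt fun r hr => ?_
  have hs := h r (by simpa using hr)
  refine (ofScalars ℂ a).le_radius_of_tendsto (l := 0) ?_
  simpa [ofScalars_norm] using hs.tendsto_atTop_zero.norm

lemma summable_norm_mul_pow_of_summable {a : ℕ → ℂ} {R : ℝ≥0∞}
    (h : ∀ z : ℂ, (‖z‖₊ : ℝ≥0∞) < R → Summable fun m => a m * z ^ m) {w : ℂ}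
    (hw : (‖w‖₊ : ℝ≥0∞) < R) : Summable fun m => ‖a m * w ^ m‖ := by
  have hw' : w ∈ Metric.eball 0 (ofScalars ℂ a).radius := by
    rw [mem_eball_zero_iff]
    exact lt_of_lt_of_le hw (le_radius_ofScalars_of_summable h)
  simpa [ofScalars_apply_eq, mul_comm] using (ofScalars ℂ a).summable_norm_apply hw'

lemma hasFPowerSeriesOnBall_ofScalars_of_hasSum {g : ℂ → ℂ} {a : ℕ → ℂ} {R : ℝ≥0∞}
    (hR : 0 < R)
    (h : ∀ z : ℂ, (‖z‖₊ : ℝ≥0∞) < R → HasSum (fun m => a m * z ^ m) (g z)) :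
    HasFPowerSeriesOnBall g (ofScalars ℂ a) 0 R where
  r_le := le_radius_ofScalars_of_summable fun z hz => (h z hz).summable
  r_pos := hR
  hasSum {z} hz := by
    rw [Metric.mem_eball, edist_zero_right] at hz
    simpa [ofScalars_apply_eq, mul_comm] using h z hz

lemma circleIntegral_mul_zpow_eq_of_hasFPowerSeriesOnBall {g : ℂ → ℂ} {a : ℕ → ℂ}
    {R : ℝ≥0∞} {r : ℝ} (hr : 0 < r) (hrR : ENNReal.ofReal r < R)
    (hg : HasFPowerSeriesOnBall g (ofScalars ℂ a) 0 R) (n : ℕ) :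
    ∮ z in C(0, r), g z * z ^ (-(n : ℤ) - 1) = 2 * π * I * a n := by
  lift r to ℝ≥0 using hr.le
  rw [ENNReal.ofReal_coe_nnreal] at hrR
  have hdiff : DifferentiableOn ℂ g (Metric.closedBall 0 r) :=
    hg.differentiableOn.mono fun z hz => by
      rw [mem_closedBall_zero_iff] at hz
      rw [Metric.mem_eball, edist_zero_right]
      refine lt_of_le_of_lt ?_ hrR
      exact_mod_cast hz
  have hcauchy : cauchyPowerSeries g 0 r = ofScalars ℂ a :=
    (hdiff.hasFPowerSeriesOnBall hr).hasFPowerSeriesAt.eq_formalMultilinearSeries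
      hg.hasFPowerSeriesAt
  have hcoeff := cauchyPowerSeries_apply g 0 r n 1
  rw [hcauchy, ofScalars_apply_eq, one_pow, smul_eq_mul, mul_one] at hcoeff
  have hintegrand : ∀ z : ℂ,
      g z * z ^ (-(n : ℤ) - 1) = (1 / (z - 0)) ^ n • (z - 0)⁻¹ • g z := by
    intro z
    rw [show -(n : ℤ) - 1 = -((n + 1 : ℕ) : ℤ) by push_cast; ring, zpow_neg, zpow_natCast]
    simp only [sub_zero, smul_eq_mul, one_div, inv_pow, pow_succ, mul_inv]
    ring
  simp only [hintegrand, hcoeff, smul_eq_mul, ← mul_assoc, mul_inv_cancel₀ two_pi_I_ne_zero,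
    one_mul]

lemma hasSum_div_sub_mul_tsum {b : ℕ → ℂ} {w y : ℂ}
    (hb : Summable fun k => ‖b k * w ^ k‖) (hwy : ‖w‖ < ‖y‖) :
    HasSum (fun m => (∑ k ∈ Finset.range (m + 1), b k * y ^ k) / y ^ m * w ^ m)
      (y / (y - w) * ∑' k, b k * w ^ k) := by
  have hy : y ≠ 0 := norm_pos_iff.1 ((norm_nonneg w).trans_lt hwy)
  have hq : ‖w / y‖ < 1 := by rwa [norm_div, div_lt_one (norm_pos_iff.2 hy)]
  have hgeom : Summable fun j => ‖(w / y) ^ j‖ := by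
    simpa [norm_pow] using summable_geometric_of_lt_one (norm_nonneg _) hq
  have h := hasSum_sum_range_mul_of_summable_norm hb hgeom
  rw [tsum_geometric_of_norm_lt_one hq] at h
  have hterms : ∀ m, ∑ k ∈ Finset.range (m + 1), b k * w ^ k * (w / y) ^ (m - k) =
      (∑ k ∈ Finset.range (m + 1), b k * y ^ k) / y ^ m * w ^ m := by
    intro m
    rw [Finset.sum_div, Finset.sum_mul]
    refine Finset.sum_congr rfl fun k hk => ?_
    obtain ⟨j, rfl⟩ := Nat.exists_eq_add_of_le (Finset.mem_range_succ_iff.1 hk)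
    rw [Nat.add_sub_cancel_left, div_pow, pow_add, pow_add]
    field_simp
  rwa [mul_comm, one_sub_div hy, inv_div, funext hterms] at h

lemma div_pow_add_div_neg_pow {y : ℂ} (hy : y ≠ 0) (m : ℕ) :
    (y + 1) / y / y ^ m + (y - 1) / y / (-y) ^ m = 2 / (y ^ 2) ^ ((m + 1) / 2) := by
  rcases Nat.even_or_odd' m with ⟨k, rfl | rfl⟩
  · rw [show (2 * k + 1) / 2 = k by omega, Even.neg_pow ⟨k, two_mul k⟩ y, ← pow_mul]
    field_simp
    ring
  · rw [show (2 * k + 1 + 1) / 2 = k + 1 by omega, Odd.neg_pow ⟨k, rfl⟩ y, ← pow_mul]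
    field_simp
    ring

lemma hasSum_two_mul_partialSum_div_pow {d : ℕ → ℂ} {y z : ℂ}
    (hd : Summable fun k => ‖d k * (y * z) ^ k‖) (hz : ‖z‖ < ‖y‖) :
    HasSum (fun m => 2 * ((∑ j ∈ Finset.range (m + 1), d j * (y ^ 2) ^ j) /
        (y ^ 2) ^ ((m + 1) / 2)) * z ^ m)
      ((y + 1) / (y - z) * ∑' k, d k * (y * z) ^ k +
        (y - 1) / (y + z) * ∑' k, d k * (-(y * z)) ^ k) := by
  have hy : y ≠ 0 := norm_pos_iff.1 ((norm_nonneg z).trans_lt hz)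
  have hpos := hasSum_div_sub_mul_tsum (b := fun k => d k * y ^ k) (w := z)
    (by simpa only [mul_pow, mul_assoc] using hd) hz
  have hneg := hasSum_div_sub_mul_tsum (b := fun k => d k * (-y) ^ k) (w := z)
    (by simpa only [neg_mul, mul_pow, mul_assoc, norm_mul, norm_pow, norm_neg] using hd)
    (by rwa [norm_neg])
  have hpartial : ∀ c : ℂ, ∀ m, ∑ k ∈ Finset.range (m + 1), d k * c ^ k * c ^ k =
      ∑ k ∈ Finset.range (m + 1), d k * (c ^ 2) ^ k := by
    intro c m
    simp only [mul_assoc, ← mul_pow, sq]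
  simp only [hpartial, neg_sq] at hpos hneg
  have hcoeff : ∀ m : ℕ, ∀ s : ℂ,
      (y + 1) / y * (s / y ^ m * z ^ m) + (y - 1) / y * (s / (-y) ^ m * z ^ m) =
        2 * (s / (y ^ 2) ^ ((m + 1) / 2)) * z ^ m := by
    intro m s
    calc _ = ((y + 1) / y / y ^ m + (y - 1) / y / (-y) ^ m) * s * z ^ m := by ring
      _ = _ := by rw [div_pow_add_div_neg_pow hy]; ring
  have hkernel : -y / (-y - z) = y / (y + z) := by rw [← neg_add', neg_div_neg_eq]
  have hsum := (hpos.mul_left ((y + 1) / y)).add (hneg.mul_left ((y - 1) / y))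
  simp only [hcoeff] at hsum
  simp only [hkernel, ← mul_assoc, div_mul_div_cancel₀ hy] at hsum
  simpa only [← neg_mul, mul_pow, mul_assoc] using hsum

theorem stmt_3_general (d : ℕ → ℂ)
    (ρ : ℝ≥0∞)
    (hconv : ∀ w : ℂ, (‖w‖₊ : ℝ≥0∞) < ρ → Summable (fun k => d k * w ^ k))
    (x : ℂ) (hx0 : x ≠ 0) (hx : (‖x‖₊ : ℝ≥0∞) < ρ)
    (y : ℂ) (hyx : y ^ 2 = x) (n : ℕ) :
    let f : ℂ → ℂ := fun w => ∑' k, d k * w ^ k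
    let fn : ℕ → ℂ → ℂ := fun k w => ∑ j ∈ Finset.range (k + 1), d j * w ^ j
    let R : ℕ → ℂ → ℂ := fun k w => fn k w / w ^ ((k + 1) / 2)
    R n x = (4 * ↑π * Complex.I)⁻¹ *
      ∮ z in C(0, ‖y‖ / 2),
        ((y + 1) / (y - z) * f (y * z) + (y - 1) / (y + z) * f (-(y * z))) *
          z ^ (-(n : ℤ) - 1) := by
  intro f fn R
  subst hyx
  have hy : 0 < ‖y‖ := norm_pos_iff.2 fun h => hx0 (by simp [h])
  have hseries : ∀ z : ℂ, (‖z‖₊ : ℝ≥0∞) < ‖y‖₊ →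
      HasSum (fun m => 2 * R m (y ^ 2) * z ^ m)
        ((y + 1) / (y - z) * f (y * z) + (y - 1) / (y + z) * f (-(y * z))) := by
    intro z hz
    have hz' : ‖z‖ < ‖y‖ := by exact_mod_cast hz
    have hyz : ‖y * z‖ < ‖y ^ 2‖ := by
      rw [norm_mul, norm_pow, sq]
      exact mul_lt_mul_of_pos_left hz' hy
    exact hasSum_two_mul_partialSum_div_pow
      (summable_norm_mul_pow_of_summable hconv (lt_trans (by exact_mod_cast hyz) hx)) hz'
  have hradius : ENNReal.ofReal (‖y‖ / 2) < ‖y‖₊ := by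
    rw [← ENNReal.ofReal_coe_nnreal, coe_nnnorm]
    exact (ENNReal.ofReal_lt_ofReal_iff hy).2 (half_lt_self hy)
  rw [circleIntegral_mul_zpow_eq_of_hasFPowerSeriesOnBall (half_pos hy) hradius
    (hasFPowerSeriesOnBall_ofScalars_of_hasSum (by simpa using hy) hseries) n]
  field_simp
  ring

/-- For `0 < |x| < ρ` and `y` a fixed square root of `x`, for every `n ≥ 0`,
`R_n(x) = (1/(4πi)) ∮_{|z| = |y|/2} (((y+1)/(y−z))·f(yz) + ((y−1)/(y+z))·f(−yz)) z^{−n−1} dz`,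
the contour being the counterclockwise circle of radius `|y|/2` centred at `0`. -/
theorem stmt_3 (d : ℕ → ℂ) (hd0 : d 0 = 1) (hdk : ∀ k, d k ≠ 0)
    (ρ : ℝ≥0∞) (hρ : 0 < ρ)
    (hconv : ∀ w : ℂ, (‖w‖₊ : ℝ≥0∞) < ρ → Summable (fun k => d k * w ^ k))
    (x : ℂ) (hx0 : x ≠ 0) (hx : (‖x‖₊ : ℝ≥0∞) < ρ)
    (y : ℂ) (hyx : y ^ 2 = x) (n : ℕ) :
    let f : ℂ → ℂ := fun w => ∑' k, d k * w ^ k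
    let fn : ℕ → ℂ → ℂ := fun k w => ∑ j ∈ Finset.range (k + 1), d j * w ^ j
    let R : ℕ → ℂ → ℂ := fun k w => fn k w / w ^ ((k + 1) / 2)
    R n x = (4 * ↑π * Complex.I)⁻¹ *
      ∮ z in C(0, ‖y‖ / 2),
        ((y + 1) / (y - z) * f (y * z) + (y - 1) / (y + z) * f (-(y * z))) *
          z ^ (-(n : ℤ) - 1) :=
  stmt_3_general d ρ hconv x hx0 hx y hyx n
end

section
/- Let c > 0 satisfy c² < ρ and f(w) ≠ 0 for all w ∈ ℂ with |w| ≤ c². Then for every n ≥ 0, (1/(2πi)) · ∮_{|y| = c} f_{2n}(y²) / (y^{2n+1} · f(y²)) dy equals 1 if n = 0 and equals 0 if n ≥ 1, where the contour integral is over the circle of radius c centered at 0, traversed counterclockwise. -/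
open scoped ENNReal NNReal Real

/-!
Put `N = 2n + 1` and `R(w) = ∑ d_{k+N} w^k`, so that `f(w) = f_{2n}(w) + w^N R(w)`. On the circle
the integrand is then `y^{-N} - y^N R(y²) / f(y²)`. The second term is holomorphic on a
neighbourhood of the closed disc, because `f` has radius at least `ρ > c²` and does not vanish
on `|w| ≤ c²`, so Cauchy's theorem kills its integral, while `∮ y^{-N} dy` is `2πi` for
`N = 1` and `0` otherwise.
-/

open FormalMultilinearSeries Metric Complex

theorem le_radius_ofScalars_of_summable_s4 {d : ℕ → ℂ} {ρ : ℝ≥0∞}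
    (h : ∀ r : ℝ≥0, 0 < r → (r : ℝ≥0∞) < ρ → Summable fun k => d k * (r : ℂ) ^ k) :
    ρ ≤ (ofScalars ℂ d).radius :=
  ENNReal.le_of_forall_pos_nnreal_lt fun r hr hrρ =>
    (ofScalars ℂ d).le_radius_of_tendsto (l := 0) <| by
      simpa [ofScalars_norm] using (h r hr hrρ).tendsto_atTop_zero.norm

theorem differentiableOn_tsum_mul_pow {d : ℕ → ℂ} {ρ : ℝ≥0∞}
    (h : ∀ r : ℝ≥0, 0 < r → (r : ℝ≥0∞) < ρ → Summable fun k => d k * (r : ℂ) ^ k) :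
    DifferentiableOn ℂ (fun w => ∑' k, d k * w ^ k) (eball 0 ρ) :=
  ((ofScalars ℂ d).analyticOnNhd.differentiableOn.mono
    (eball_subset_eball (le_radius_ofScalars_of_summable_s4 h))).congr fun w _ =>
      (ofScalars_sum_eq d w).symm

theorem Summable.mul_pow_shift {𝕜 : Type*} [Field 𝕜] [TopologicalSpace 𝕜] [IsTopologicalRing 𝕜]
    {a : ℕ → 𝕜} {w : 𝕜} (hw : w ≠ 0) (h : Summable fun k => a k * w ^ k) (N : ℕ) :
    Summable fun k => a (k + N) * w ^ k := by
  refine (((summable_nat_add_iff N).2 h).mul_right (w ^ N)⁻¹).congr fun k => ?_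
  rw [pow_add]
  field_simp

theorem tsum_mul_pow_eq_sum_add_pow_mul_tsum {𝕜 : Type*} [Field 𝕜] [TopologicalSpace 𝕜]
    [IsTopologicalRing 𝕜] [T2Space 𝕜]
    {a : ℕ → 𝕜} {w : 𝕜} (h : Summable fun k => a k * w ^ k) (N : ℕ) :
    ∑' k, a k * w ^ k = ∑ k ∈ Finset.range N, a k * w ^ k + w ^ N * ∑' k, a (k + N) * w ^ k := by
  rw [← h.sum_add_tsum_nat_add N, ← tsum_mul_left]
  congr 1
  exact tsum_congr fun k => by ring

theorem circleIntegral_inv_pow_succ {c : ℝ} (hc : 0 < c) (m : ℕ) :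
    (∮ y in C(0, c), (y ^ (m + 1))⁻¹) = if m = 0 then 2 * π * I else 0 := by
  split_ifs with hm
  · simpa [hm] using circleIntegral.integral_sub_inv_of_mem_ball (c := 0) (mem_ball_self hc)
  · have hne : -((m + 1 : ℕ) : ℤ) ≠ -1 := by omega
    simpa only [sub_zero, zpow_neg, zpow_natCast] using
      circleIntegral.integral_sub_zpow_of_ne hne 0 0 c

theorem circleIntegrable_inv_pow {c : ℝ} (hc : 0 < c) (N : ℕ) :
    CircleIntegrable (fun y => (y ^ N)⁻¹) 0 c :=
  ((continuousOn_pow N).inv₀ fun _ hy =>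
    pow_ne_zero _ (ne_of_mem_sphere hy hc.ne')).circleIntegrable hc.le

theorem div_pow_mul_eq_inv_pow_sub {K : Type*} [Field K] {P F R y : K} (N : ℕ) (hy : y ≠ 0)
    (hF : F ≠ 0) (h : F = P + (y ^ 2) ^ N * R) :
    P / (y ^ N * F) = (y ^ N)⁻¹ - y ^ N * R / F := by
  rw [eq_sub_of_add_eq h.symm]
  field_simp
  ring

theorem sq_mem_eball_of_norm_le {y : ℂ} {c : ℝ} {ρ : ℝ≥0∞} (hy : ‖y‖ ≤ c)
    (hcρ : ENNReal.ofReal (c ^ 2) < ρ) : y ^ 2 ∈ eball 0 ρ := by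
  rw [mem_eball_zero_iff, ← ofReal_norm]
  refine lt_of_le_of_lt (ENNReal.ofReal_le_ofReal ?_) hcρ
  rw [norm_pow]
  gcongr

theorem stmt_4_general (d : ℕ → ℂ)
    (ρ : ℝ≥0∞)
    (hconv : ∀ w : ℂ, (‖w‖₊ : ℝ≥0∞) < ρ → Summable (fun k => d k * w ^ k))
    (c : ℝ) (hc : 0 < c) (hcρ : ENNReal.ofReal (c ^ 2) < ρ)
    (hfz : ∀ w : ℂ, ‖w‖ ≤ c ^ 2 → (∑' k, d k * w ^ k) ≠ 0) (n : ℕ) :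
    (2 * ↑π * Complex.I)⁻¹ *
      (∮ y in C(0, c),
        (∑ k ∈ Finset.range (2 * n + 1), d k * (y ^ 2) ^ k) /
          (y ^ (2 * n + 1) * ∑' k, d k * (y ^ 2) ^ k)) =
      if n = 0 then 1 else 0 := by
  set N := 2 * n + 1
  set F : ℂ → ℂ := fun w => ∑' k, d k * w ^ k
  set R : ℂ → ℂ := fun w => ∑' k, d (k + N) * w ^ k
  have hsummable (r : ℝ≥0) (_ : 0 < r) (hr : (r : ℝ≥0∞) < ρ) :
      Summable fun k => d k * (r : ℂ) ^ k :=
    hconv r (by simpa using hr)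
  have hF : DifferentiableOn ℂ F (eball 0 ρ) := differentiableOn_tsum_mul_pow hsummable
  have hR : DifferentiableOn ℂ R (eball 0 ρ) := differentiableOn_tsum_mul_pow fun r hr hrρ =>
    (hsummable r hr hrρ).mul_pow_shift (by exact_mod_cast hr.ne') N
  have hFne {y : ℂ} (hy : ‖y‖ ≤ c) : F (y ^ 2) ≠ 0 :=
    hfz _ (by rw [norm_pow]; gcongr)
  set G : ℂ → ℂ := fun y => y ^ N * R (y ^ 2) / F (y ^ 2)
  have hG : DifferentiableOn ℂ G (closedBall 0 c) := by
    have hmaps : Set.MapsTo (· ^ 2) (closedBall (0 : ℂ) c) (eball 0 ρ) := fun y hy =>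
      sq_mem_eball_of_norm_le (mem_closedBall_zero_iff.1 hy) hcρ
    exact ((differentiableOn_pow N).mul (hR.comp (differentiableOn_pow 2) hmaps)).div
      (hF.comp (differentiableOn_pow 2) hmaps) fun y hy => hFne (mem_closedBall_zero_iff.1 hy)
  have hsplit : Set.EqOn
      (fun y => (∑ k ∈ Finset.range N, d k * (y ^ 2) ^ k) / (y ^ N * F (y ^ 2)))
      (fun y => (y ^ N)⁻¹ - G y) (sphere 0 c) := by
    intro y hy
    have hyc : ‖y‖ ≤ c := (mem_sphere_zero_iff_norm.1 hy).le
    exact div_pow_mul_eq_inv_pow_sub N (ne_of_mem_sphere hy hc.ne') (hFne hyc) <|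
      tsum_mul_pow_eq_sum_add_pow_mul_tsum
        (hconv _ (mem_eball_zero_iff.1 (sq_mem_eball_of_norm_le hyc hcρ))) N
  have hGint : CircleIntegrable G 0 c :=
    (hG.continuousOn.mono sphere_subset_closedBall).circleIntegrable hc.le
  rw [circleIntegral.integral_congr hc.le hsplit,
    circleIntegral.integral_sub (circleIntegrable_inv_pow hc N) hGint,
    (hG.diffContOnCl_ball subset_rfl).circleIntegral_eq_zero hc.le, sub_zero,
    circleIntegral_inv_pow_succ hc]
  simp only [mul_eq_zero, two_ne_zero, false_or]
  split_ifs
  · exact inv_mul_cancel₀ two_pi_I_ne_zero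
  · exact mul_zero _

/-- If `c > 0`, `c² < ρ` and `f(w) ≠ 0` for `|w| ≤ c²`, then for every `n ≥ 0`,
`(1/(2πi)) ∮_{|y|=c} f_{2n}(y²) / (y^{2n+1} f(y²)) dy` equals `1` if `n = 0` and `0` if
`n ≥ 1`, the contour being the counterclockwise circle of radius `c` centred at `0`. -/
theorem stmt_4 (d : ℕ → ℂ) (hd0 : d 0 = 1) (hdk : ∀ k, d k ≠ 0)
    (ρ : ℝ≥0∞) (hρ : 0 < ρ)
    (hconv : ∀ w : ℂ, (‖w‖₊ : ℝ≥0∞) < ρ → Summable (fun k => d k * w ^ k))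
    (c : ℝ) (hc : 0 < c) (hcρ : ENNReal.ofReal (c ^ 2) < ρ)
    (hfz : ∀ w : ℂ, ‖w‖ ≤ c ^ 2 → (∑' k, d k * w ^ k) ≠ 0) (n : ℕ) :
    (2 * ↑π * Complex.I)⁻¹ *
      (∮ y in C(0, c),
        (∑ k ∈ Finset.range (2 * n + 1), d k * (y ^ 2) ^ k) /
          (y ^ (2 * n + 1) * ∑' k, d k * (y ^ 2) ^ k)) =
      if n = 0 then 1 else 0 :=
  stmt_4_general d ρ hconv c hc hcρ hfz n
end

section
/- Let c > 0 satisfy c² < ρ and f(w) ≠ 0 for all w ∈ ℂ with |w| ≤ c². Then for every n ≥ 0, (1/(2πi)) · ∮_{|y| = c} f_{2n+1}(y²) / (y^{2n+3} · f(y²)) dy = 0, where the contour integral is over the circle of radius c centered at 0, traversed counterclockwise. -/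
open scoped ENNReal NNReal Real
open Metric

/-!
Write `f(w) = f_{2n+1}(w) + w^{2n+2} u(w)`, where `u(w) = ∑ d_{k+2n+2} w^k` is the tail series.
On the circle the integrand is then `y^{-(2n+3)} - y^{2n+1} u(y²) / f(y²)`. The first term has
no residue because `2n+3 ≠ 1`; the second is holomorphic on the closed disc `|y| ≤ c`, since
both series converge on `|w| < r` for any `c² < r < ρ` and `f` has no zeros on `|w| ≤ c²`,
so Cauchy's theorem makes its integral vanish.
-/

theorem analyticAt_tsum_mul_pow {𝕜 : Type*} [NontriviallyNormedField 𝕜]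
    [CompleteSpace 𝕜] {e : ℕ → 𝕜} {x z : 𝕜} (hx : Summable fun k => e k * x ^ k)
    (hz : ‖z‖ < ‖x‖) : AnalyticAt 𝕜 (fun w => ∑' k, e k * w ^ k) z := by
  set p := FormalMultilinearSeries.ofScalars 𝕜 e
  have hrad : (‖x‖₊ : ℝ≥0∞) ≤ p.radius := by
    refine p.le_radius_of_tendsto (l := 0) ?_
    simpa [p, FormalMultilinearSeries.ofScalars_norm] using hx.tendsto_atTop_zero.norm
  have hzp : z ∈ eball (0 : 𝕜) p.radius := by
    rw [mem_eball, edist_zero_right]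
    exact lt_of_lt_of_le (by exact_mod_cast hz) hrad
  have := (p.hasFPowerSeriesOnBall (pos_of_gt hzp)).analyticAt_of_mem hzp
  rwa [← FormalMultilinearSeries.ofScalarsSum, FormalMultilinearSeries.ofScalarsSum_eq_tsum]
    at this

theorem summable_mul_pow_nat_add {𝕜 : Type*} [NormedField 𝕜] {e : ℕ → 𝕜} {x : 𝕜}
    (hx : Summable fun k => e k * x ^ k) (hx0 : x ≠ 0) (m : ℕ) :
    Summable fun k => e (k + m) * x ^ k := by
  refine (((summable_nat_add_iff m).2 hx).mul_right (x ^ m)⁻¹).congr fun k => ?_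
  field_simp
  ring

theorem tsum_mul_pow_eq_sum_range_add {𝕜 : Type*} [NormedField 𝕜] {e : ℕ → 𝕜} {w : 𝕜}
    (hw : Summable fun k => e k * w ^ k) (m : ℕ) :
    ∑' k, e k * w ^ k =
      ∑ k ∈ Finset.range m, e k * w ^ k + w ^ m * ∑' k, e (k + m) * w ^ k := by
  rw [← hw.sum_add_tsum_nat_add m, ← tsum_mul_left]
  congr 1
  exact tsum_congr fun k => by ring

theorem div_pow_mul_eq_zpow_sub {K : Type*} [Field K] {y F P U : K} (n : ℕ) (hy : y ≠ 0)
    (hF : F ≠ 0) (hsplit : F = P + (y ^ 2) ^ (2 * n + 2) * U) :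
    P / (y ^ (2 * n + 3) * F) = y ^ (-(2 * n + 3 : ℤ)) - y ^ (2 * n + 1) * U / F := by
  rw [show (-(2 * n + 3 : ℤ)) = -((2 * n + 3 : ℕ) : ℤ) by push_cast; ring, zpow_neg,
    zpow_natCast]
  field_simp
  rw [hsplit]
  ring

theorem circleIntegral_sub_zpow_sub_eq_zero {z : ℂ} {R : ℝ} (hR : 0 < R) {k : ℤ} (hk : k ≠ -1)
    {G : ℂ → ℂ} (hG : DifferentiableOn ℂ G (closedBall z R)) :
    ∮ y in C(z, R), ((y - z) ^ k - G y) = 0 := by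
  have hzpow : CircleIntegrable (fun y => (y - z) ^ k) z R :=
    circleIntegrable_sub_zpow_iff.2 <| .inr <| .inr <| by simp [abs_of_pos hR, hR.ne]
  have hG' : DifferentiableOn ℂ G (closure (ball z R)) := by rwa [closure_ball z hR.ne']
  rw [circleIntegral.integral_sub hzpow
      ((hG.continuousOn.mono sphere_subset_closedBall).circleIntegrable hR.le),
    circleIntegral.integral_sub_zpow_of_ne hk, hG'.diffContOnCl.circleIntegral_eq_zero hR.le,
    sub_zero]

theorem stmt_5_general (d : ℕ → ℂ) (ρ : ℝ≥0∞)
    (hconv : ∀ w : ℂ, (‖w‖₊ : ℝ≥0∞) < ρ → Summable (fun k => d k * w ^ k))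
    (c : ℝ) (hc : 0 < c) (hcρ : ENNReal.ofReal (c ^ 2) < ρ)
    (hfz : ∀ w : ℂ, ‖w‖ ≤ c ^ 2 → (∑' k, d k * w ^ k) ≠ 0) (n : ℕ) :
    (2 * ↑π * Complex.I)⁻¹ *
      (∮ y in C(0, c),
        (∑ k ∈ Finset.range (2 * n + 2), d k * (y ^ 2) ^ k) /
          (y ^ (2 * n + 3) * ∑' k, d k * (y ^ 2) ^ k)) = 0 := by
  obtain ⟨r, hcr₀, hrρ⟩ := ENNReal.lt_iff_exists_nnreal_btwn.1 hcρ
  have hcr : c ^ 2 < r := by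
    simpa using (ENNReal.ofReal_lt_iff_lt_toReal (by positivity) (by simp)).1 hcr₀
  have hr : Summable fun k => d k * ((r : ℝ) : ℂ) ^ k := hconv _ (by simpa using hrρ)
  have hr0 : ((r : ℝ) : ℂ) ≠ 0 := Complex.ofReal_ne_zero.2 ((sq_nonneg c).trans_lt hcr).ne'
  have hsq : ∀ y ∈ closedBall (0 : ℂ) c, ‖y ^ 2‖ ≤ c ^ 2 := fun y hy => by
    rw [norm_pow]; gcongr; simpa using hy
  have hlt : ∀ y ∈ closedBall (0 : ℂ) c, ‖y ^ 2‖ < r := fun y hy => (hsq y hy).trans_lt hcr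
  have hdiff : ∀ e : ℕ → ℂ, Summable (fun k => e k * ((r : ℝ) : ℂ) ^ k) →
      ∀ y ∈ closedBall (0 : ℂ) c, DifferentiableAt ℂ (fun y => ∑' k, e k * (y ^ 2) ^ k) y :=
    fun e he y hy => (analyticAt_tsum_mul_pow he (by simpa using hlt y hy)).differentiableAt.comp y
      (differentiableAt_pow 2)
  have hG : DifferentiableOn ℂ (fun y => y ^ (2 * n + 1) *
      (∑' k, d (k + (2 * n + 2)) * (y ^ 2) ^ k) / ∑' k, d k * (y ^ 2) ^ k) (closedBall 0 c) :=
    fun y hy => (((differentiableAt_pow _).mul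
      (hdiff _ (summable_mul_pow_nat_add hr hr0 _) y hy)).div
      (hdiff d hr y hy) (hfz _ (hsq y hy))).differentiableWithinAt
  have hEq : Set.EqOn _ _ (sphere (0 : ℂ) c) := fun y hy =>
    have hy' := sphere_subset_closedBall hy
    div_pow_mul_eq_zpow_sub n (by rintro rfl; simp [hc.ne] at hy) (hfz _ (hsq y hy'))
      (tsum_mul_pow_eq_sum_range_add (hconv _ (lt_trans (by exact_mod_cast hlt y hy') hrρ)) _)
  rw [circleIntegral.integral_congr hc.le hEq]
  simpa using circleIntegral_sub_zpow_sub_eq_zero (z := 0) hc (by omega) hG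

/-- If `c > 0`, `c² < ρ` and `f(w) ≠ 0` for `|w| ≤ c²`, then for every `n ≥ 0`,
`(1/(2πi)) ∮_{|y|=c} f_{2n+1}(y²) / (y^{2n+3} f(y²)) dy = 0`, the contour being the
counterclockwise circle of radius `c` centred at `0`. -/
theorem stmt_5 (d : ℕ → ℂ) (hd0 : d 0 = 1) (hdk : ∀ k, d k ≠ 0)
    (ρ : ℝ≥0∞) (hρ : 0 < ρ)
    (hconv : ∀ w : ℂ, (‖w‖₊ : ℝ≥0∞) < ρ → Summable (fun k => d k * w ^ k))
    (c : ℝ) (hc : 0 < c) (hcρ : ENNReal.ofReal (c ^ 2) < ρ)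
    (hfz : ∀ w : ℂ, ‖w‖ ≤ c ^ 2 → (∑' k, d k * w ^ k) ≠ 0) (n : ℕ) :
    (2 * ↑π * Complex.I)⁻¹ *
      (∮ y in C(0, c),
        (∑ k ∈ Finset.range (2 * n + 2), d k * (y ^ 2) ^ k) /
          (y ^ (2 * n + 3) * ∑' k, d k * (y ^ 2) ^ k)) = 0 :=
  stmt_5_general d ρ hconv c hc hcρ hfz n
end

section
/- The ℂ-linear span of the family {R_n : n ≥ 0} is the whole space of Laurent polynomials over ℂ, i.e. every Laurent polynomial ∑_{j=p}^{q} λ_j x^j (p, q ∈ ℤ, p ≤ q, λ_j ∈ ℂ) is a finite ℂ-linear combination of the R_n. -/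
/-- The Laurent polynomials `R_{2n} = ∑_{k=0}^{2n} d_k T^{k−n}`,
`R_{2n+1} = ∑_{k=0}^{2n+1} d_k T^{k−n−1}` (the shift being `(n+1)/2` in ℕ-division). -/
noncomputable def Rlp (d : ℕ → ℂ) (n : ℕ) : LaurentPolynomial ℂ :=
  ∑ k ∈ Finset.range (n + 1),
    LaurentPolynomial.C (d k) * LaurentPolynomial.T ((k : ℤ) - (((n + 1) / 2 : ℕ) : ℤ))

/-!
Enumerate the exponents as `0, -1, 1, -2, 2, …`. Modulo monomials occurring earlier in this
enumeration, `R_n` is a nonzero multiple of the `n`-th monomial (`d_n x^{n/2}` for even `n`,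
`d_0 x^{-(n+1)/2}` for odd `n`), so the `R_n` are triangular with respect to the
monomial basis, and every monomial is in their span by induction along the enumeration.
-/

open LaurentPolynomial Submodule

theorem Submodule.mem_of_triangular {K V ι : Type*} [DivisionRing K] [AddCommGroup V]
    [Module K V] (S : Submodule K V) (e : ι → V) (rank : ι → ℕ)
    (h : ∀ i, ∃ c : K, c ≠ 0 ∧ c • e i ∈ S ⊔ span K (e '' {j | rank j < rank i})) (i : ι) :
    e i ∈ S := by
  induction hn : rank i using Nat.strong_induction_on generalizing i with
  | _ n ih =>
    obtain ⟨c, hc, hmem⟩ := h i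
    have hlower : span K (e '' {j | rank j < rank i}) ≤ S :=
      span_le.mpr <| Set.image_subset_iff.mpr fun j hj => ih _ (hn ▸ hj) j rfl
    simpa [hc] using S.smul_mem c⁻¹ (sup_le le_rfl hlower hmem)

theorem LaurentPolynomial.span_range_T (R : Type*) [Semiring R] :
    span R (Set.range (T : ℤ → R[T;T⁻¹])) = ⊤ := by
  rw [eq_top_iff]
  rintro f -
  induction f using LaurentPolynomial.induction_on' with
  | add p q hp hq => exact add_mem hp hq
  | C_mul_T n a =>
    rw [← smul_eq_C_mul]
    exact smul_mem _ _ (subset_span (Set.mem_range_self n))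

/-- The position of `m` in the enumeration `0, -1, 1, -2, 2, …` of `ℤ`. -/
def zigzagRank (m : ℤ) : ℕ := (max (2 * m) (-2 * m - 1)).toNat

theorem exists_Rlp_sub_C_mul_T_mem_span (d : ℕ → ℂ) (m : ℤ) :
    ∃ k, Rlp d (zigzagRank m) - C (d k) * T m ∈
      span ℂ (T '' {j | zigzagRank j < zigzagRank m}) := by
  set n := zigzagRank m
  have hn : n = (max (2 * m) (-2 * m - 1)).toNat := rfl
  set s := (n + 1) / 2
  set k₀ := (m + s).toNat
  have hk₀ : k₀ ∈ Finset.range (n + 1) := by simp only [Finset.mem_range]; omega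
  refine ⟨k₀, ?_⟩
  rw [Rlp, ← Finset.add_sum_erase _ _ hk₀, show (k₀ : ℤ) - s = m by omega, add_sub_cancel_left]
  refine sum_mem fun k hk => ?_
  rw [← smul_eq_C_mul]
  refine smul_mem _ _ (subset_span ⟨_, ?_, rfl⟩)
  simp only [Finset.mem_erase, Finset.mem_range] at hk
  simp only [Set.mem_ofPred_eq, zigzagRank]
  omega

theorem stmt_7_general (d : ℕ → ℂ) (hdk : ∀ k, d k ≠ 0) :
    Submodule.span ℂ (Set.range (Rlp d)) = ⊤ := by
  refine eq_top_iff.mpr <| (span_range_T ℂ).symm.le.trans <| span_le.mpr ?_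
  rintro _ ⟨m, rfl⟩
  refine mem_of_triangular _ T zigzagRank (fun m => ?_) m
  obtain ⟨k, hk⟩ := exists_Rlp_sub_C_mul_T_mem_span d m
  refine ⟨d k, hdk k, ?_⟩
  rw [smul_eq_C_mul, ← sub_sub_cancel (Rlp d _) (C (d k) * T m)]
  exact sub_mem (mem_sup_left (subset_span (Set.mem_range_self _))) (mem_sup_right hk)

/-- The ℂ-linear span of `{R_n : n ≥ 0}` is the whole space of Laurent
polynomials over ℂ, where `(d_k)` is any sequence of nonzero complex numbers with
`d_0 = 1`. -/
theorem stmt_7 (d : ℕ → ℂ) (hd0 : d 0 = 1) (hdk : ∀ k, d k ≠ 0) :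
    Submodule.span ℂ (Set.range (Rlp d)) = ⊤ :=
  stmt_7_general d hdk
end

section
/- Let 𝐧 ≥ 1 and let L be a ℂ-linear functional on 𝒜_𝐧 such that a := L(x^{−𝐧}) ≠ 0. Then there exists a positive measure μ on the Borel subsets of ℂ which is finitely atomic (a finite nonnegative combination of Dirac measures) such that L(Q) = ∫_ℂ Q(z) · a z^{𝐧} dμ(z) for every Q ∈ 𝒜_𝐧; equivalently, L(x^{k−𝐧}) = a · ∫_ℂ z^k dμ(z) for every k ∈ {0, 1, ..., 2𝐧}. -/
/-!
Dividing by `a`, it suffices to realise any `m₀ = 1, m₁, …, m_{2n} ∈ ℂ` as the moments of a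
finitely atomic probability measure with no atom at `0` (at nonzero atoms
`z ^ (k - n) * z ^ n = z ^ k`, which turns `L (x ^ (k - n)) = a ∫ z ^ k dμ` into the integral
formula for every `Q ∈ 𝒜_𝐧`, both sides being linear in `Q`).

Mass `t` spread evenly over the points `u ζ ^ j`, `ζ` a primitive `d`-th root of unity, has
`k`-th moment `t u ^ k` if `d ∣ k` and `0` otherwise. Adding such a cluster with `d = s + 1`
and suitable `u` corrects the `(s + 1)`-st moment without disturbing the moments `1, …, s`;
`M + 1` clusters of mass `1 / (M + 1)` each then give total mass `1`.
-/

open scoped ENNReal NNReal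

/-- Evaluation of a Laurent polynomial at a complex number. -/
noncomputable def leval (y : ℂ) (p : LaurentPolynomial ℂ) : ℂ :=
  p.coeff.sum fun n a => a * y ^ n

open MeasureTheory Finset

theorem integral_finsetSum_smul_dirac {ι α E : Type*} [MeasurableSpace α]
    [MeasurableSingletonClass α] [NormedAddCommGroup E] [NormedSpace ℝ E] [CompleteSpace E]
    (s : Finset ι) (w : ι → ℝ≥0) (x : ι → α) (g : α → E) :
    ∫ a, g a ∂(∑ i ∈ s, (w i : ℝ≥0∞) • Measure.dirac (x i)) = ∑ i ∈ s, w i • g (x i) := by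
  rw [integral_finsetSum_measure fun i _ => (integrable_dirac enorm_lt_top).smul_measure
    ENNReal.coe_ne_top]
  refine sum_congr rfl fun i _ => ?_
  rw [integral_smul_measure, integral_dirac]
  rfl

lemma Finset.sum_eq_sum_equivFin {α M : Type*} [AddCommMonoid M] (s : Finset α) (g : α → M) :
    ∑ x ∈ s, g x = ∑ j : Fin #s, g (s.equivFin.symm j) := by
  rw [← s.sum_coe_sort, ← s.equivFin.symm.sum_comp]

lemma pow_mul_zpow_sub {G : Type*} [GroupWithZero G] {z : G} (hz : z ≠ 0) (n k : ℕ) :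
    z ^ n * z ^ ((k : ℤ) - n) = z ^ k := by
  rw [← zpow_natCast z n, ← zpow_add₀ hz, add_sub_cancel, zpow_natCast]

noncomputable def levalₗ (y : ℂ) : LaurentPolynomial ℂ →ₗ[ℂ] ℂ :=
  Finsupp.linearCombination ℂ (fun j : ℤ => y ^ j) ∘ₗ
    (AddMonoidAlgebra.coeffLinearEquiv ℂ).toLinearMap

lemma levalₗ_apply (y : ℂ) (p : LaurentPolynomial ℂ) : levalₗ y p = leval y p := rfl

lemma leval_T (y : ℂ) (j : ℤ) : leval y (LaurentPolynomial.T j) = y ^ j := by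
  change (Finsupp.single j (1 : ℂ)).sum (fun n a => a * y ^ n) = y ^ j
  rw [Finsupp.sum_single_index (zero_mul _), one_mul]

lemma eq_sum_leval_mul_pow_of_mem_span {n : ℕ} {L : LaurentPolynomial ℂ →ₗ[ℂ] ℂ}
    {s : Finset ℂ} (hs : 0 ∉ s) (c : ℂ → ℂ)
    (hL : ∀ k ≤ 2 * n, L (LaurentPolynomial.T ((k : ℤ) - n)) = ∑ z ∈ s, c z * z ^ k)
    {Q : LaurentPolynomial ℂ} (hQ : Q ∈ Submodule.span ℂ
      {p : LaurentPolynomial ℂ | ∃ j : ℤ, |j| ≤ (n : ℤ) ∧ p = LaurentPolynomial.T j}) :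
    L Q = ∑ z ∈ s, c z * (leval z Q * z ^ n) := by
  let Φ : LaurentPolynomial ℂ →ₗ[ℂ] ℂ := ∑ z ∈ s, (c z * z ^ n) • levalₗ z
  have hΦ : Set.EqOn L Φ (Submodule.span ℂ
      {p : LaurentPolynomial ℂ | ∃ j : ℤ, |j| ≤ (n : ℤ) ∧ p = LaurentPolynomial.T j}) := by
    refine LinearMap.eqOn_span' ?_
    rintro _ ⟨j, hj, rfl⟩
    obtain ⟨hj₁, hj₂⟩ := abs_le.mp hj
    obtain ⟨k, hk⟩ := Int.eq_ofNat_of_zero_le (by omega : 0 ≤ j + n)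
    obtain rfl : j = k - n := by omega
    rw [hL k (by omega), LinearMap.sum_apply]
    refine Finset.sum_congr rfl fun z hz => ?_
    have hz0 : z ≠ 0 := ne_of_mem_of_not_mem hz hs
    rw [LinearMap.smul_apply, levalₗ_apply, leval_T, smul_eq_mul, ← pow_mul_zpow_sub hz0 n k]
    ring
  rw [hΦ hQ, LinearMap.sum_apply]
  refine Finset.sum_congr rfl fun z _ => ?_
  rw [LinearMap.smul_apply, levalₗ_apply, smul_eq_mul]
  ring

theorem IsPrimitiveRoot.sum_range_pow_pow {R : Type*} [CommRing R] [IsDomain R] {ζ : R} {d : ℕ}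
    (hζ : IsPrimitiveRoot ζ d) (k : ℕ) :
    ∑ j ∈ range d, (ζ ^ j) ^ k = if d ∣ k then (d : R) else 0 := by
  simp_rw [← pow_mul, mul_comm _ k, pow_mul]
  split_ifs with hdk
  · simp [hζ.pow_eq_one_iff_dvd k |>.mpr hdk]
  · have hne : ζ ^ k ≠ 1 := fun h => hdk (hζ.pow_eq_one_iff_dvd k |>.mp h)
    refine eq_zero_of_ne_zero_of_mul_right_eq_zero (sub_ne_zero_of_ne hne) ?_
    rw [geom_sum_mul, ← pow_mul, mul_comm, pow_mul, hζ.pow_eq_one, one_pow, sub_self]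

noncomputable def moment (f : ℂ →₀ ℝ≥0) (k : ℕ) : ℂ :=
  Finsupp.linearCombination ℝ≥0 (fun z : ℂ => z ^ k) f

lemma moment_add (f g : ℂ →₀ ℝ≥0) (k : ℕ) : moment (f + g) k = moment f k + moment g k :=
  map_add _ f g

lemma moment_eq_sum (f : ℂ →₀ ℝ≥0) (k : ℕ) : moment f k = ∑ z ∈ f.support, f z • z ^ k := rfl

noncomputable def rootsOfUnityAtoms (d : ℕ) (u : ℂ) (t : ℝ≥0) : ℂ →₀ ℝ≥0 :=
  ∑ j ∈ range d, Finsupp.single (u * Complex.exp (2 * Real.pi * Complex.I / d) ^ j) (t / d)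

lemma rootsOfUnityAtoms_apply_zero (d : ℕ) {u : ℂ} (hu : u ≠ 0) (t : ℝ≥0) :
    rootsOfUnityAtoms d u t 0 = 0 := by
  simp [rootsOfUnityAtoms, Finsupp.finsetSum_apply, hu, Complex.exp_ne_zero]

lemma moment_rootsOfUnityAtoms {d : ℕ} (hd : d ≠ 0) (u : ℂ) (t : ℝ≥0) (k : ℕ) :
    moment (rootsOfUnityAtoms d u t) k = if d ∣ k then t * u ^ k else 0 := by
  have hζ := Complex.isPrimitiveRoot_exp d hd
  have hsum := hζ.sum_range_pow_pow k
  simp only [moment, rootsOfUnityAtoms, map_sum, Finsupp.linearCombination_single, mul_pow]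
  simp only [NNReal.smul_def, Complex.real_smul, ← mul_assoc, ← Finset.mul_sum, hsum]
  split_ifs
  · push_cast
    field_simp
  · simp

lemma exists_atoms_moment_eq {d : ℕ} (hd : d ≠ 0) {t : ℝ≥0} (ht : t ≠ 0) (c : ℂ) :
    ∃ g : ℂ →₀ ℝ≥0, g 0 = 0 ∧ moment g 0 = t ∧ moment g d = c ∧
      ∀ k, ¬ d ∣ k → moment g k = 0 := by
  by_cases hc : c = 0
  · -- `u = 0` would put the atoms at `0`; the `2d`-th roots of unity have `d`-th moment `0`.
    have h2d : 2 * d ≠ 0 := by omega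
    refine ⟨rootsOfUnityAtoms (2 * d) 1 t, rootsOfUnityAtoms_apply_zero _ one_ne_zero t, ?_, ?_,
      fun k hk => ?_⟩
    · simp [moment_rootsOfUnityAtoms h2d]
    · rw [moment_rootsOfUnityAtoms h2d, if_neg (Nat.not_dvd_of_pos_of_lt (by omega) (by omega)), hc]
    · rw [moment_rootsOfUnityAtoms h2d, if_neg fun h => hk (dvd_of_mul_left_dvd h)]
  · set u : ℂ := (c / t) ^ (d⁻¹ : ℂ)
    have hu : u ^ d = c / t := Complex.cpow_nat_inv_pow _ hd
    have ht' : (t : ℂ) ≠ 0 := by exact_mod_cast ht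
    have hu0 : u ≠ 0 := by
      rintro h
      rw [h, zero_pow hd, eq_comm, div_eq_zero_iff] at hu
      exact hc (hu.resolve_right ht')
    refine ⟨rootsOfUnityAtoms d u t, rootsOfUnityAtoms_apply_zero d hu0 t, ?_, ?_,
      fun k hk => ?_⟩
    · simp [moment_rootsOfUnityAtoms hd]
    · rw [moment_rootsOfUnityAtoms hd, if_pos dvd_rfl, hu]
      field_simp
    · rw [moment_rootsOfUnityAtoms hd, if_neg hk]

lemma exists_atoms_moments_Icc (m : ℕ → ℂ) {t : ℝ≥0} (ht : t ≠ 0) (s : ℕ) :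
    ∃ f : ℂ →₀ ℝ≥0, f 0 = 0 ∧ moment f 0 = s * t ∧ ∀ k ∈ Icc 1 s, moment f k = m k := by
  induction s with
  | zero => exact ⟨0, rfl, by simp [moment], by simp⟩
  | succ s ih =>
    obtain ⟨f, hf0, hf_mass, hf⟩ := ih
    obtain ⟨g, hg0, hg_mass, hg, hg_other⟩ :=
      exists_atoms_moment_eq s.succ_ne_zero ht (m (s + 1) - moment f (s + 1))
    refine ⟨f + g, by simp [hf0, hg0], by push_cast [moment_add, hf_mass, hg_mass]; ring,
      fun k hk => ?_⟩
    obtain ⟨hk1, hks⟩ := mem_Icc.mp hk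
    rw [moment_add]
    rcases hks.lt_or_eq with hks | rfl
    · rw [hf k (mem_Icc.mpr ⟨hk1, Nat.le_of_lt_succ hks⟩),
        hg_other k (Nat.not_dvd_of_pos_of_lt hk1 hks), add_zero]
    · rw [hg, add_sub_cancel]

lemma exists_atoms_moments (m : ℕ → ℂ) (hm : m 0 = 1) (M : ℕ) :
    ∃ f : ℂ →₀ ℝ≥0, f 0 = 0 ∧ ∀ k ≤ M, moment f k = m k := by
  obtain ⟨f, hf0, hf_mass, hf⟩ :=
    exists_atoms_moments_Icc m (one_div_ne_zero (Nat.cast_add_one_ne_zero M)) (M + 1)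
  refine ⟨f, hf0, fun k hk => ?_⟩
  rcases k.eq_zero_or_pos with rfl | hk0
  · rw [hf_mass, hm]
    push_cast
    field_simp
  · exact hf k (mem_Icc.mpr ⟨hk0, by omega⟩)

theorem stmt_8_general (n : ℕ) (L : LaurentPolynomial ℂ →ₗ[ℂ] ℂ)
    (ha : L (LaurentPolynomial.T (-(n : ℤ))) ≠ 0) :
    ∃ μ : MeasureTheory.Measure ℂ,
      (∃ (N : ℕ) (w : Fin N → ℝ≥0) (zs : Fin N → ℂ),
        μ = ∑ j, (w j : ℝ≥0∞) • MeasureTheory.Measure.dirac (zs j)) ∧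
      (∀ Q ∈ Submodule.span ℂ
          {p : LaurentPolynomial ℂ | ∃ j : ℤ, |j| ≤ (n : ℤ) ∧ p = LaurentPolynomial.T j},
        L Q = ∫ z, leval z Q * (L (LaurentPolynomial.T (-(n : ℤ))) * z ^ n) ∂μ) ∧
      ∀ k : ℕ, k ≤ 2 * n →
        L (LaurentPolynomial.T ((k : ℤ) - (n : ℤ))) =
          L (LaurentPolynomial.T (-(n : ℤ))) * ∫ z, z ^ k ∂μ := by
  set a := L (LaurentPolynomial.T (-(n : ℤ)))
  obtain ⟨f, hf0, hf⟩ := exists_atoms_moments (fun k : ℕ => L (LaurentPolynomial.T (k - n)) / a)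
    (by simpa only [Nat.cast_zero, zero_sub] using div_self ha) (2 * n)
  set μ : Measure ℂ := ∑ z ∈ f.support, (f z : ℝ≥0∞) • Measure.dirac z
  have hμ (g : ℂ → ℂ) : ∫ z, g z ∂μ = ∑ z ∈ f.support, f z • g z :=
    integral_finsetSum_smul_dirac _ _ id g
  have hmoment (k : ℕ) (hk : k ≤ 2 * n) : L (LaurentPolynomial.T (k - n)) = a * ∫ z, z ^ k ∂μ := by
    rw [hμ, ← moment_eq_sum, hf k hk, mul_div_cancel₀ _ ha]
  refine ⟨μ, ⟨_, _, _, f.support.sum_eq_sum_equivFin _⟩, fun Q hQ => ?_, hmoment⟩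
  have hf0' : 0 ∉ f.support := Finsupp.notMem_support_iff.mpr hf0
  rw [hμ, eq_sum_leval_mul_pow_of_mem_span hf0' (fun z => a * f z) (fun k hk => ?_) hQ]
  · refine Finset.sum_congr rfl fun z _ => ?_
    simp only [NNReal.smul_def, Complex.real_smul]
    ring
  · simp only [hmoment k hk, hμ, Finset.mul_sum, NNReal.smul_def, Complex.real_smul, mul_assoc]

/-- Let `𝐧 ≥ 1` and `L` be a ℂ-linear functional (on the space `𝒜_𝐧` of
Laurent polynomials `∑_{j=−𝐧}^{𝐧} λ_j x^j`, here the restriction to that span) with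
`a := L(x^{−𝐧}) ≠ 0`.  Then there is a finitely atomic positive measure `μ` on ℂ with
`L(Q) = ∫ Q(z)·a z^𝐧 dμ(z)` for all `Q ∈ 𝒜_𝐧`; equivalently
`L(x^{k−𝐧}) = a·∫ z^k dμ` for `k = 0, 1, ..., 2𝐧`. -/
theorem stmt_8 (n : ℕ) (hn : 1 ≤ n) (L : LaurentPolynomial ℂ →ₗ[ℂ] ℂ)
    (ha : L (LaurentPolynomial.T (-(n : ℤ))) ≠ 0) :
    ∃ μ : MeasureTheory.Measure ℂ,
      (∃ (N : ℕ) (w : Fin N → ℝ≥0) (zs : Fin N → ℂ),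
        μ = ∑ j, (w j : ℝ≥0∞) • MeasureTheory.Measure.dirac (zs j)) ∧
      (∀ Q ∈ Submodule.span ℂ
          {p : LaurentPolynomial ℂ | ∃ j : ℤ, |j| ≤ (n : ℤ) ∧ p = LaurentPolynomial.T j},
        L Q = ∫ z, leval z Q * (L (LaurentPolynomial.T (-(n : ℤ))) * z ^ n) ∂μ) ∧
      ∀ k : ℕ, k ≤ 2 * n →
        L (LaurentPolynomial.T ((k : ℤ) - (n : ℤ))) =
          L (LaurentPolynomial.T (-(n : ℤ))) * ∫ z, z ^ k ∂μ :=
  stmt_8_general n L ha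
end

section
/- For every m ∈ ℕ and every finite sequence of complex numbers s_0, s_1, ..., s_m with s_0 = 1, there exists a positive measure μ on the Borel subsets of ℂ which is finitely atomic (a finite nonnegative combination of Dirac measures) such that ∫_ℂ z^k dμ(z) = s_k for every k ∈ {0, 1, ..., m}. -/
open scoped ENNReal NNReal

open MeasureTheory Finset

/-!
Induction on `m`. The vertices `z ζ ^ j` (`j < n`, `ζ` a primitive `n`-th root of unity) of a
regular `n`-gon, with equal weights, have vanishing moments of orders `1, …, n - 1`, while their
`n`-th moment is a prescribed multiple of `z ^ n`, hence arbitrary. So given atoms of mass `c / 2`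
matching `s 1, …, s m`, a regular `(m + 1)`-gon of mass `c / 2` corrects the moment of order
`m + 1` without disturbing the lower ones.
-/

theorem integral_sum_smul_dirac {α E : Type*} [MeasurableSpace α] [MeasurableSingletonClass α]
    [NormedAddCommGroup E] [NormedSpace ℝ E] [CompleteSpace E] {N : ℕ} (w : Fin N → ℝ≥0)
    (x : Fin N → α) (f : α → E) :
    ∫ a, f a ∂(∑ j, (w j : ℝ≥0∞) • Measure.dirac (x j)) = ∑ j, (w j : ℝ) • f (x j) := by
  rw [integral_finsetSum_measure fun j _ ↦
    (integrable_dirac enorm_lt_top).smul_measure ENNReal.coe_ne_top]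
  simp only [integral_smul_measure, integral_dirac, ENNReal.coe_toReal]

namespace IsPrimitiveRoot

variable {R : Type*} [CommRing R] {ζ : R} {n : ℕ}

theorem sum_mul_pow_pow_eq_zero [IsDomain R] (hζ : IsPrimitiveRoot ζ n) {k : ℕ} (hk0 : 0 < k)
    (hkn : k < n) (z : R) : ∑ j ∈ range n, (z * ζ ^ j) ^ k = 0 := by
  have hζk : ∑ j ∈ range n, (ζ ^ k) ^ j = 0 :=
    eq_zero_of_ne_zero_of_mul_left_eq_zero
      (sub_ne_zero_of_ne (hζ.pow_ne_one_of_pos_of_lt hk0.ne' hkn).symm)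
      (by rw [mul_neg_geom_sum, ← pow_mul, mul_comm, pow_mul, hζ.pow_eq_one, one_pow, sub_self])
  simp_rw [mul_pow, ← pow_mul, mul_comm _ k, pow_mul, ← mul_sum, hζk, mul_zero]

theorem sum_mul_pow_pow_self (hζ : IsPrimitiveRoot ζ n) (z : R) :
    ∑ j ∈ range n, (z * ζ ^ j) ^ n = n * z ^ n := by
  simp_rw [mul_pow, ← pow_mul, mul_comm _ n, pow_mul, hζ.pow_eq_one, one_pow, mul_one, sum_const,
    card_range, nsmul_eq_mul]

end IsPrimitiveRoot

theorem exists_regular_polygon_moments {n : ℕ} (hn : n ≠ 0) {c : ℝ≥0} (hc : c ≠ 0) (t : ℂ) :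
    ∃ (w : Fin n → ℝ≥0) (zs : Fin n → ℂ), ∑ j, w j = c ∧
      (∀ k, 0 < k → k < n → ∑ j, (w j : ℂ) * zs j ^ k = 0) ∧
      ∑ j, (w j : ℂ) * zs j ^ n = t := by
  obtain ⟨z, hz⟩ := IsAlgClosed.exists_pow_nat_eq (t / c) (Nat.pos_of_ne_zero hn)
  obtain ⟨ζ, hζ⟩ : ∃ ζ : ℂ, IsPrimitiveRoot ζ n := ⟨_, Complex.isPrimitiveRoot_exp n hn⟩
  have hsum (k : ℕ) : ∑ j : Fin n, ((c / n : ℝ≥0) : ℂ) * (z * ζ ^ (j : ℕ)) ^ k =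
      ((c / n : ℝ≥0) : ℂ) * ∑ j ∈ range n, (z * ζ ^ j) ^ k := by
    rw [mul_sum, Fin.sum_univ_eq_sum_range (fun j ↦ ((c / n : ℝ≥0) : ℂ) * (z * ζ ^ j) ^ k)]
  refine ⟨fun _ ↦ c / n, fun j ↦ z * ζ ^ (j : ℕ), ?_, fun k hk0 hkn ↦ ?_, ?_⟩
  · simp only [sum_const, card_univ, Fintype.card_fin, nsmul_eq_mul]
    field_simp
  · rw [hsum, hζ.sum_mul_pow_pow_eq_zero hk0 hkn, mul_zero]
  · rw [hsum, hζ.sum_mul_pow_pow_self, hz]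
    have hc' : (c : ℂ) ≠ 0 := by exact_mod_cast hc
    push_cast
    field_simp

theorem exists_atoms_moments_s9 (m : ℕ) {c : ℝ≥0} (hc : c ≠ 0) (s : ℕ → ℂ) :
    ∃ (N : ℕ) (w : Fin N → ℝ≥0) (zs : Fin N → ℂ), ∑ j, w j = c ∧
      ∀ k, 0 < k → k ≤ m → ∑ j, (w j : ℂ) * zs j ^ k = s k := by
  induction m generalizing c with
  | zero => exact ⟨1, fun _ ↦ c, fun _ ↦ 0, by simp, fun k hk0 hk ↦ by omega⟩
  | succ m ih =>
    have hc2 : c / 2 ≠ 0 := by positivity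
    obtain ⟨N, w, zs, hmass, hmom⟩ := ih hc2
    obtain ⟨w', zs', hmass', hmom', hmom_top⟩ := exists_regular_polygon_moments m.succ_ne_zero hc2
      (s (m + 1) - ∑ j, (w j : ℂ) * zs j ^ (m + 1))
    refine ⟨N + (m + 1), Fin.append w w', Fin.append zs zs', ?_, fun k hk0 hk ↦ ?_⟩
    · rw [Fin.sum_univ_add]
      simp only [Fin.append_left, Fin.append_right, hmass, hmass', add_halves]
    · rw [Fin.sum_univ_add]
      simp only [Fin.append_left, Fin.append_right]
      rcases hk.lt_or_eq with hk | rfl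
      · rw [hmom k hk0 (Nat.lt_succ_iff.mp hk), hmom' k hk0 hk, add_zero]
      · rw [hmom_top, add_sub_cancel]

/-- For every `m ∈ ℕ` and complex numbers `s_0, ..., s_m` with `s_0 = 1`,
there is a finitely atomic positive measure `μ` on (the Borel subsets of) ℂ — a finite
nonnegative combination of Dirac measures — with `∫ z^k dμ = s_k` for `k = 0, ..., m`. -/
theorem stmt_9 (m : ℕ) (s : ℕ → ℂ) (hs0 : s 0 = 1) :
    ∃ μ : MeasureTheory.Measure ℂ,
      (∃ (N : ℕ) (w : Fin N → ℝ≥0) (zs : Fin N → ℂ),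
        μ = ∑ j, (w j : ℝ≥0∞) • MeasureTheory.Measure.dirac (zs j)) ∧
      ∀ k : ℕ, k ≤ m → ∫ z, z ^ k ∂μ = s k := by
  obtain ⟨N, w, zs, hmass, hmom⟩ := exists_atoms_moments_s9 m one_ne_zero s
  refine ⟨_, ⟨N, w, zs, rfl⟩, fun k hk ↦ ?_⟩
  rw [integral_sum_smul_dirac]
  simp only [Complex.real_smul]
  rcases k.eq_zero_or_pos with rfl | hk0
  · simp only [pow_zero, mul_one, hs0]
    exact_mod_cast hmass
  · exact_mod_cast hmom k hk0 hk
end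

section
/- For every n ≥ 1, the rational function identity Q̃_{2n+1}(x) = (x^{−1} + g_{2n+1}) · Q̃_{2n}(x) + f_{2n+1} · Q̃_{2n−1}(x) holds (as Laurent polynomials in x), where g_k = −1/c_k and f_k = −λ_k ξ_{k−2}/ξ_k; moreover for n = 0, Q̃_1(x) = (x^{−1} + g_1) Q̃_0(x). -/
/-!
Dividing the recurrence `P_{2n+1} = (x - c_{2n+1}) P_{2n} - λ_{2n+1} x P_{2n-1}` by
`ξ_{2n+1} x^{n+1}` gives the claim termwise: since `ξ_{2n+1} = -c_{2n+1} ξ_{2n}`, the term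
`x P_{2n}` becomes `g_{2n+1} Q̃_{2n}`, the term `-c_{2n+1} P_{2n}` becomes `x⁻¹ Q̃_{2n}`, and
`λ_{2n+1} x P_{2n-1}` becomes `-f_{2n+1} Q̃_{2n-1}`. The case `n = 0` is the same computation
without the last term.
-/

open scoped Polynomial
open LaurentPolynomial
open Polynomial (X toLaurent toLaurent_X toLaurent_C)

theorem LaurentPolynomial.T_one_mul_T_neg_one {R : Type*} [Semiring R] :
    (T 1 * T (-1) : R[T;T⁻¹]) = 1 := by
  rw [← T_add, add_neg_cancel, T_zero]

section
variable {K : Type*} [Field K]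

theorem C_inv_mul_toLaurent_X_sub_C_mul {c ξ ξ' : K} (hc : c ≠ 0) (hξ' : ξ' = -c * ξ)
    (p : K[X]) (m : ℤ) :
    C ξ'⁻¹ * toLaurent ((X - Polynomial.C c) * p) * T (m - 1) =
      (T (-1) + C (-c⁻¹)) * (C ξ⁻¹ * toLaurent p * T m) := by
  have e1 : C ξ'⁻¹ = C (-c⁻¹) * C ξ⁻¹ := by
    rw [← map_mul, hξ']; congr 1; field_simp
  have e2 : C ξ'⁻¹ * C c = -C ξ⁻¹ := by
    rw [← map_mul, ← map_neg, hξ']; congr 1; field_simp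
  rw [T_sub]
  simp only [map_sub, map_mul, toLaurent_X, toLaurent_C]
  linear_combination C ξ'⁻¹ * toLaurent p * T m * T_one_mul_T_neg_one (R := K)
    + toLaurent p * T m * e1 - toLaurent p * T (-1) * T m * e2

theorem C_inv_mul_toLaurent_C_mul_X_mul {ξ' η l : K} (hη : η ≠ 0) (q : K[X]) (m : ℤ) :
    C ξ'⁻¹ * toLaurent (Polynomial.C l * X * q) * T (m - 1) =
      -(C (-(l * η / ξ')) * (C η⁻¹ * toLaurent q * T m)) := by
  have e : C ξ'⁻¹ * C l = -(C (-(l * η / ξ')) * C η⁻¹) := by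
    rw [← map_mul, ← map_mul, ← map_neg]; congr 1; field_simp
  rw [T_sub]
  simp only [map_mul, toLaurent_X, toLaurent_C]
  linear_combination C ξ'⁻¹ * C l * toLaurent q * T m * T_one_mul_T_neg_one (R := K)
    + toLaurent q * T m * e

theorem C_inv_mul_toLaurent_three_term {c ξ ξ' η l : K} (hc : c ≠ 0) (hξ' : ξ' = -c * ξ)
    (hη : η ≠ 0) (p q : K[X]) (m : ℤ) :
    C ξ'⁻¹ * toLaurent ((X - Polynomial.C c) * p - Polynomial.C l * X * q) * T (m - 1) =
      (T (-1) + C (-c⁻¹)) * (C ξ⁻¹ * toLaurent p * T m) +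
        C (-(l * η / ξ')) * (C η⁻¹ * toLaurent q * T m) := by
  rw [map_sub, mul_sub, sub_mul, C_inv_mul_toLaurent_X_sub_C_mul hc hξ',
    C_inv_mul_toLaurent_C_mul_X_mul hη, sub_neg_eq_add]

end

theorem stmt_10_general (c lam : ℕ → ℂ) (hc0 : c 0 = 1)
    (hc : ∀ n : ℕ, 1 ≤ n → c n ≠ 0)
    (P : ℕ → Polynomial ℂ)
    (hP1 : P 1 = (Polynomial.X - Polynomial.C (c 1)) * P 0)
    (hPrec : ∀ n : ℕ, 2 ≤ n →
      P n = (Polynomial.X - Polynomial.C (c n)) * P (n - 1) -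
        Polynomial.C (lam n) * Polynomial.X * P (n - 2)) :
    let ξ : ℕ → ℂ := fun k => (-1) ^ k * ∏ j ∈ Finset.range (k + 1), c j
    let g : ℕ → ℂ := fun k => -(c k)⁻¹
    let fc : ℕ → ℂ := fun k => -(lam k * ξ (k - 2) / ξ k)
    let Qt : ℕ → LaurentPolynomial ℂ := fun k =>
      LaurentPolynomial.C (ξ k)⁻¹ * Polynomial.toLaurent (P k) *
        LaurentPolynomial.T (-(((k + 1) / 2 : ℕ) : ℤ))
    (∀ n : ℕ, 1 ≤ n →
      Qt (2 * n + 1) =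
        (LaurentPolynomial.T (-1) + LaurentPolynomial.C (g (2 * n + 1))) * Qt (2 * n) +
          LaurentPolynomial.C (fc (2 * n + 1)) * Qt (2 * n - 1)) ∧
    Qt 1 = (LaurentPolynomial.T (-1) + LaurentPolynomial.C (g 1)) * Qt 0 := by
  intro ξ g fc Qt
  have hc_ne : ∀ j, c j ≠ 0 := fun j => by
    rcases j with _ | j
    · simp [hc0]
    · exact hc _ j.succ_pos
  have hξ : ∀ k, ξ k ≠ 0 := fun k =>
    mul_ne_zero (by simp) (Finset.prod_ne_zero_iff.mpr fun j _ => hc_ne j)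
  have hξ_succ : ∀ k, ξ (k + 1) = -c (k + 1) * ξ k := fun k => by
    simp only [ξ, Finset.prod_range_succ, pow_succ]
    ring
  refine ⟨fun n hn => ?_, ?_⟩
  · have hrec := hPrec (2 * n + 1) (by omega)
    rw [show 2 * n + 1 - 1 = 2 * n by omega, show 2 * n + 1 - 2 = 2 * n - 1 by omega] at hrec
    have h := C_inv_mul_toLaurent_three_term (hc_ne (2 * n + 1)) (hξ_succ (2 * n)) (hξ (2 * n - 1))
      (l := lam (2 * n + 1)) (P (2 * n)) (P (2 * n - 1)) (-n)
    rw [← hrec] at h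
    simp only [Qt]
    rw [show (2 * n + 1 + 1) / 2 = n + 1 by omega, show (2 * n + 1) / 2 = n by omega,
      show (2 * n - 1 + 1) / 2 = n by omega, Nat.cast_succ, neg_add']
    exact h
  · have h := C_inv_mul_toLaurent_X_sub_C_mul (hc_ne 1) (hξ_succ 0) (P 0) 0
    rw [← hP1] at h
    exact h

/-- With `P_n` the monic polynomials generated by
`P_n = (X − c_n) P_{n−1} − λ_n X P_{n−2}` (`P_{−1} = 0`, `P_0 = 1`, `c_n ≠ 0` for `n ≥ 1`,
`λ_n ≠ 0` for `n ≥ 2`), `c_0 := 1`, `ξ_k = (−1)^k ∏_{j=0}^k c_j`,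
`Q̃_{2n} = P_{2n}/(ξ_{2n} x^n)`, `Q̃_{2n+1} = P_{2n+1}/(ξ_{2n+1} x^{n+1})`:
for every `n ≥ 1`,
`Q̃_{2n+1} = (x⁻¹ + g_{2n+1}) Q̃_{2n} + f_{2n+1} Q̃_{2n−1}` as Laurent polynomials, where
`g_k = −1/c_k`, `f_k = −λ_k ξ_{k−2}/ξ_k`; moreover `Q̃_1 = (x⁻¹ + g_1) Q̃_0`. -/
theorem stmt_10 (c lam : ℕ → ℂ) (hc0 : c 0 = 1)
    (hc : ∀ n : ℕ, 1 ≤ n → c n ≠ 0) (hlam : ∀ n : ℕ, 2 ≤ n → lam n ≠ 0)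
    (P : ℕ → Polynomial ℂ) (hP0 : P 0 = 1)
    (hP1 : P 1 = (Polynomial.X - Polynomial.C (c 1)) * P 0)
    (hPrec : ∀ n : ℕ, 2 ≤ n →
      P n = (Polynomial.X - Polynomial.C (c n)) * P (n - 1) -
        Polynomial.C (lam n) * Polynomial.X * P (n - 2)) :
    let ξ : ℕ → ℂ := fun k => (-1) ^ k * ∏ j ∈ Finset.range (k + 1), c j
    let g : ℕ → ℂ := fun k => -(c k)⁻¹
    let fc : ℕ → ℂ := fun k => -(lam k * ξ (k - 2) / ξ k)
    let Qt : ℕ → LaurentPolynomial ℂ := fun k =>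
      LaurentPolynomial.C (ξ k)⁻¹ * Polynomial.toLaurent (P k) *
        LaurentPolynomial.T (-(((k + 1) / 2 : ℕ) : ℤ))
    (∀ n : ℕ, 1 ≤ n →
      Qt (2 * n + 1) =
        (LaurentPolynomial.T (-1) + LaurentPolynomial.C (g (2 * n + 1))) * Qt (2 * n) +
          LaurentPolynomial.C (fc (2 * n + 1)) * Qt (2 * n - 1)) ∧
    Qt 1 = (LaurentPolynomial.T (-1) + LaurentPolynomial.C (g 1)) * Qt 0 :=
  stmt_10_general c lam hc0 hc P hP1 hPrec
end

section
/- For every n ≥ 0, the identity Q̃_{2n+2}(x) = (1 + g_{2n+2} x) · Q̃_{2n+1}(x) + f_{2n+2} · Q̃_{2n}(x) holds (as Laurent polynomials in x), where g_k = −1/c_k and f_k = −λ_k ξ_{k−2}/ξ_k. -/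
/-!
Since `ξ_{2n+2} = −c_{2n+2} ξ_{2n+1}`, dividing the recurrence
`P_{2n+2} = (x − c_{2n+2}) P_{2n+1} − λ_{2n+2} x P_{2n}` by `ξ_{2n+2} x^{n+1}` gives the
identity term by term: `(x − c_{2n+2}) / ξ_{2n+2} = (1 + g_{2n+2} x) / ξ_{2n+1}` and
`λ_{2n+2} x / (ξ_{2n+2} x^{n+1}) = −f_{2n+2} / (ξ_{2n} x^n)`.
-/

open LaurentPolynomial Polynomial Finset

section OrthogonalLaurent

variable {K : Type*} [Field K]

def xi (c : ℕ → K) (k : ℕ) : K := (-1) ^ k * ∏ j ∈ range (k + 1), c j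

lemma xi_succ (c : ℕ → K) (k : ℕ) : xi c (k + 1) = -c (k + 1) * xi c k := by
  simp only [xi, prod_range_succ _ (k + 1), pow_succ]
  ring

lemma inv_xi_succ (c : ℕ → K) (k : ℕ) : (xi c (k + 1))⁻¹ = -(c (k + 1))⁻¹ * (xi c k)⁻¹ := by
  rw [xi_succ, mul_inv, inv_neg]

lemma xi_ne_zero {c : ℕ → K} (hc : ∀ j, c j ≠ 0) (k : ℕ) : xi c k ≠ 0 :=
  mul_ne_zero (pow_ne_zero _ (neg_ne_zero.mpr one_ne_zero)) (prod_ne_zero_iff.mpr fun j _ => hc j)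

/-- The paper's `Q̃_k`; note `(k + 1) / 2 = ⌈k / 2⌉`. -/
noncomputable def laurentQ (c : ℕ → K) (P : ℕ → K[X]) (k : ℕ) : K[T;T⁻¹] :=
  LaurentPolynomial.C (xi c k)⁻¹ * toLaurent (P k) * T (-(((k + 1) / 2 : ℕ) : ℤ))

variable (c : ℕ → K) (P : ℕ → K[X]) (n : ℕ)

lemma laurentQ_two_mul :
    laurentQ c P (2 * n) = LaurentPolynomial.C (xi c (2 * n))⁻¹ * toLaurent (P (2 * n)) *
      T (-n) := by
  rw [laurentQ, show (2 * n + 1) / 2 = n by omega]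

lemma laurentQ_two_mul_add_one :
    laurentQ c P (2 * n + 1) = LaurentPolynomial.C (xi c (2 * n + 1))⁻¹ *
      toLaurent (P (2 * n + 1)) * T (-(n + 1)) := by
  rw [laurentQ, show (2 * n + 1 + 1) / 2 = n + 1 by omega]
  push_cast
  rfl

lemma laurentQ_two_mul_add_two :
    laurentQ c P (2 * n + 2) = LaurentPolynomial.C (xi c (2 * n + 2))⁻¹ *
      toLaurent (P (2 * n + 2)) * T (-(n + 1)) := by
  rw [laurentQ, show (2 * n + 2 + 1) / 2 = n + 1 by omega]
  push_cast
  rfl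

theorem laurentQ_two_mul_add_two_eq {c : ℕ → K} (hc : ∀ j, c j ≠ 0) (lam : ℕ → K)
    (hrec : P (2 * n + 2) = (X - Polynomial.C (c (2 * n + 2))) * P (2 * n + 1) -
      Polynomial.C (lam (2 * n + 2)) * X * P (2 * n)) :
    laurentQ c P (2 * n + 2) =
      (1 + LaurentPolynomial.C (-(c (2 * n + 2))⁻¹) * T 1) * laurentQ c P (2 * n + 1) +
        LaurentPolynomial.C (-(lam (2 * n + 2) * xi c (2 * n) / xi c (2 * n + 2))) *
          laurentQ c P (2 * n) := by
  have hξ : LaurentPolynomial.C (xi c (2 * n + 2))⁻¹ =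
      -LaurentPolynomial.C (c (2 * n + 2))⁻¹ * LaurentPolynomial.C (xi c (2 * n + 1))⁻¹ := by
    rw [inv_xi_succ, map_mul, map_neg]
  have hc₂ : LaurentPolynomial.C (c (2 * n + 2))⁻¹ * LaurentPolynomial.C (c (2 * n + 2)) = 1 := by
    rw [← map_mul, inv_mul_cancel₀ (hc _), map_one]
  have hξ₀ : LaurentPolynomial.C (xi c (2 * n))⁻¹ * LaurentPolynomial.C (xi c (2 * n)) = 1 := by
    rw [← map_mul, inv_mul_cancel₀ (xi_ne_zero hc _), map_one]
  have hT : (T 1 : K[T;T⁻¹]) * T (-(n + 1)) = T (-n) := by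
    rw [← T_add]
    ring_nf
  rw [laurentQ_two_mul, laurentQ_two_mul_add_one, laurentQ_two_mul_add_two, hrec, ← hT]
  simp only [map_sub, map_mul, map_neg, div_eq_mul_inv, toLaurent_X, toLaurent_C]
  linear_combination
    (T 1 - LaurentPolynomial.C (c (2 * n + 2))) * toLaurent (P (2 * n + 1)) * T (-(n + 1)) * hξ +
    LaurentPolynomial.C (xi c (2 * n + 1))⁻¹ * toLaurent (P (2 * n + 1)) * T (-(n + 1)) * hc₂ +
    LaurentPolynomial.C (lam (2 * n + 2)) * LaurentPolynomial.C (xi c (2 * n + 2))⁻¹ * T 1 *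
      toLaurent (P (2 * n)) * T (-(n + 1)) * hξ₀

end OrthogonalLaurent

open LaurentPolynomial Polynomial in
theorem stmt_11_general (c lam : ℕ → ℂ) (hc0 : c 0 = 1)
    (hc : ∀ n : ℕ, 1 ≤ n → c n ≠ 0)
    (P : ℕ → Polynomial ℂ)
    (hPrec : ∀ n : ℕ, 2 ≤ n →
      P n = (Polynomial.X - Polynomial.C (c n)) * P (n - 1) -
        Polynomial.C (lam n) * Polynomial.X * P (n - 2)) :
    let ξ : ℕ → ℂ := fun k => (-1) ^ k * ∏ j ∈ Finset.range (k + 1), c j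
    let g : ℕ → ℂ := fun k => -(c k)⁻¹
    let fc : ℕ → ℂ := fun k => -(lam k * ξ (k - 2) / ξ k)
    let Qt : ℕ → LaurentPolynomial ℂ := fun k =>
      LaurentPolynomial.C (ξ k)⁻¹ * Polynomial.toLaurent (P k) *
        LaurentPolynomial.T (-(((k + 1) / 2 : ℕ) : ℤ))
    ∀ n : ℕ,
      Qt (2 * n + 2) =
        (1 + LaurentPolynomial.C (g (2 * n + 2)) * LaurentPolynomial.T 1) * Qt (2 * n + 1) +
          LaurentPolynomial.C (fc (2 * n + 2)) * Qt (2 * n) := by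
  intro ξ g fc Qt n
  have hc_ne_zero : ∀ j, c j ≠ 0 := by
    rintro (_ | j)
    · simp [hc0]
    · exact hc _ j.succ_pos
  exact laurentQ_two_mul_add_two_eq P n hc_ne_zero lam (hPrec (2 * n + 2) (by omega))

/-- With `P_n` the monic polynomials generated by
`P_n = (X − c_n) P_{n−1} − λ_n X P_{n−2}` (`P_{−1} = 0`, `P_0 = 1`, `c_n ≠ 0` for `n ≥ 1`,
`λ_n ≠ 0` for `n ≥ 2`), `c_0 := 1`, `ξ_k = (−1)^k ∏_{j=0}^k c_j`,
`Q̃_{2n} = P_{2n}/(ξ_{2n} x^n)`, `Q̃_{2n+1} = P_{2n+1}/(ξ_{2n+1} x^{n+1})`: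
for every `n ≥ 0`,
`Q̃_{2n+2} = (1 + g_{2n+2} x) Q̃_{2n+1} + f_{2n+2} Q̃_{2n}` as Laurent polynomials, where
`g_k = −1/c_k`, `f_k = −λ_k ξ_{k−2}/ξ_k`. -/
theorem stmt_11 (c lam : ℕ → ℂ) (hc0 : c 0 = 1)
    (hc : ∀ n : ℕ, 1 ≤ n → c n ≠ 0) (hlam : ∀ n : ℕ, 2 ≤ n → lam n ≠ 0)
    (P : ℕ → Polynomial ℂ) (hP0 : P 0 = 1)
    (hP1 : P 1 = (Polynomial.X - Polynomial.C (c 1)) * P 0)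
    (hPrec : ∀ n : ℕ, 2 ≤ n →
      P n = (Polynomial.X - Polynomial.C (c n)) * P (n - 1) -
        Polynomial.C (lam n) * Polynomial.X * P (n - 2)) :
    let ξ : ℕ → ℂ := fun k => (-1) ^ k * ∏ j ∈ Finset.range (k + 1), c j
    let g : ℕ → ℂ := fun k => -(c k)⁻¹
    let fc : ℕ → ℂ := fun k => -(lam k * ξ (k - 2) / ξ k)
    let Qt : ℕ → LaurentPolynomial ℂ := fun k =>
      LaurentPolynomial.C (ξ k)⁻¹ * Polynomial.toLaurent (P k) *
        LaurentPolynomial.T (-(((k + 1) / 2 : ℕ) : ℤ))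
    ∀ n : ℕ,
      Qt (2 * n + 2) =
        (1 + LaurentPolynomial.C (g (2 * n + 2)) * LaurentPolynomial.T 1) * Qt (2 * n + 1) +
          LaurentPolynomial.C (fc (2 * n + 2)) * Qt (2 * n) :=
  stmt_11_general c lam hc0 hc P hPrec
end
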